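/- arXiv:1707.02466 — 2 statements merged into one kernel-verified Lean document; each statement's English description precedes it below -/
import Mathlib

section
/- In the heap model with the evolution relation rel, for a fixed id and type code a, the predicate has_a_t id a (stating that the heap maps id to a Used Typed cell with type code a) is stable with respect to rel. -/
inductive Tag where
  | Typed : Tag
  | Untyped : Bool → Tag

inductive Cell where
  | Unused : Cell
  | Used : ℕ → Tag → Cell

structure Heap where
  h : ℕ → Cell
  ctr : ℕ
  inv : ∀ n, ctr ≤ n → h n = Cell.Unused

def rel (H₀ H₁ : Heap) : Prop :=
  ∀ id, match H₀.h id, H₁.h id with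
    | Cell.Used a Tag.Typed, Cell.Used b Tag.Typed => a = b
    | Cell.Used _ (Tag.Untyped l₀), Cell.Used _ (Tag.Untyped l₁) => ¬l₀ = true → ¬l₁ = true
    | Cell.Unused, _ => True
    | _, _ => False

def has_a_t (id a : ℕ) (H : Heap) : Prop := H.h id = Cell.Used a Tag.Typed

theorem stmt_12 (id a : ℕ) :
    ∀ H₀ H₁ : Heap, has_a_t id a H₀ → rel H₀ H₁ → has_a_t id a H₁ := by
  intro H₀ H₁ h0 hr
  have := hr id
  unfold has_a_t at *
  rw [h0] at this
  cases hc : H₁.h id with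
  | Unused => rw [hc] at this; simp at this
  | Used b t =>
    rw [hc] at this
    cases t with
    | Typed => simp only at this; rw [this]
    | Untyped l => simp at this
end

section
/- In the Ariadne protocol model, the ghost transitions used to type the protocol code respect the saved-based preorder: (n, Crash w v) is related to (n+1, Recover w v), (n, Writing w v) is related to (n+1, Ok w), and (n, Ok v) is related to (n, Writing w v), for all n and states v, w. -/
inductive Case (State : Type*) where
  | Ok : State → Case State
  | Recover : State → State → Case State
  | Writing : State → State → Case State
  | Crash : State → State → Case State

def saved {State : Type*} : (ℕ × Case State) → (ℕ × State) → Prop :=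
  fun (n, g) (seqn, u) =>
    (seqn < n) ∨
    (seqn = n ∧ match g with
      | Case.Ok v => u = v
      | Case.Recover w v => u = w ∨ u = v
      | Case.Writing w v => u = w ∨ u = v
      | Case.Crash w v => u = w ∨ u = v) ∨
    (seqn = n + 1 ∧ match g with
      | Case.Ok _ => False
      | Case.Recover _ _ => False
      | Case.Writing v _ => u = v
      | Case.Crash v w => u = v ∨ u = w)

def casePreorder {State : Type*} (c₀ c₁ : ℕ × Case State) : Prop :=
  ∀ s, saved c₀ s → saved c₁ s

theorem stmt_15 {State : Type*} (n : ℕ) (v w : State) :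
    casePreorder (n, Case.Crash w v) (n + 1, Case.Recover w v) ∧
    casePreorder (n, Case.Writing w v) (n + 1, Case.Ok w) ∧
    casePreorder (n, Case.Ok v) (n, Case.Writing w v) := by
  refine ⟨?_, ?_, ?_⟩ <;>
  · rintro ⟨seqn, u⟩ h
    simp only [saved] at h ⊢
    rcases h with h | ⟨h, h2⟩ | ⟨h, h2⟩ <;> subst_vars <;> simp_all <;> omega
end
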